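/- Let p ≥ 1 and let f be a polynomial on ℝⁿ with Δᵖ f = 0. Then there exist harmonic polynomials φ_0, …, φ_{p-1} such that f(x) = Σ_{m=0}^{p-1} |x|^{2m} φ_m(x) for all x ∈ ℝⁿ. -/

import Mathlib

/-!
On homogeneous polynomials of degree `e` in `n` variables, `q ↦ Δ (|x|² q)` equals
`(2n + 4e) q + |x|² Δ q` (Euler's identity); an induction on the degree shows it is injective,
hence bijective on the finite-dimensional space of such polynomials. Thus for homogeneous `g`
there is `q` with `Δ (|x|² q) = Δ g`, so that `g - |x|² q` is harmonic. Iterating the commutation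
relation, `Δ^[k+1] (|x|² q) = c Δ^[k] q + |x|² Δ^[k+1] q` with `c > 0`, so `Δ^[p] g = 0` forces
`Δ^[p-1] q = 0` and induction on `p` decomposes `g`. A general polynomial is treated one homogeneous
component at a time, since `Δ` lowers the degree by exactly two.
-/

/-- The Laplacian of `f : ℝⁿ → ℝ` at `x`, as the trace of the second derivative. -/
noncomputable def stmtLaplacian {n : ℕ} (f : EuclideanSpace ℝ (Fin n) → ℝ)
    (x : EuclideanSpace ℝ (Fin n)) : ℝ :=
  ∑ i : Fin n, iteratedFDeriv ℝ 2 f x (fun _ => EuclideanSpace.single i (1 : ℝ))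

namespace MvPolynomial

variable {σ R : Type*}

section CommRing

variable [CommRing R]

theorem homogeneousComponent_pderiv (d : ℕ) (i : σ) (f : MvPolynomial σ R) :
    homogeneousComponent d (pderiv i f) = pderiv i (homogeneousComponent (d + 1) f) := by
  ext m
  simp [coeff_pderiv, coeff_homogeneousComponent, map_add, Finsupp.degree_single]

variable [Fintype σ]

variable (σ R) in
noncomputable def laplacian : MvPolynomial σ R →ₗ[R] MvPolynomial σ R :=
  ∑ i : σ, (pderiv i).toLinearMap ∘ₗ (pderiv i).toLinearMap

variable (σ R) in
noncomputable def normSq : MvPolynomial σ R := ∑ i : σ, X i ^ 2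

local notation "Δ" => laplacian σ R

theorem laplacian_apply (f : MvPolynomial σ R) : Δ f = ∑ i, pderiv i (pderiv i f) := by
  simp [laplacian]

theorem laplacian_of_isEmpty [IsEmpty σ] (f : MvPolynomial σ R) : Δ f = 0 := by
  simp [laplacian_apply]

theorem isHomogeneous_normSq : (normSq σ R).IsHomogeneous 2 :=
  IsHomogeneous.sum _ _ _ fun i _ => isHomogeneous_X_pow i 2

theorem pderiv_normSq (i : σ) : pderiv i (normSq σ R) = 2 * X i := by
  classical
  simp [normSq, pderiv_X, Pi.single_apply]

theorem IsHomogeneous.laplacian {f : MvPolynomial σ R} {e : ℕ} (hf : f.IsHomogeneous e) :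
    (Δ f).IsHomogeneous (e - 2) := by
  rw [laplacian_apply]
  exact IsHomogeneous.sum _ _ _ fun i _ => hf.pderiv.pderiv

theorem IsHomogeneous.iterate_laplacian {f : MvPolynomial σ R} {e : ℕ} (hf : f.IsHomogeneous e)
    (k : ℕ) : (Δ^[k] f).IsHomogeneous (e - 2 * k) := by
  induction k with
  | zero => simpa using hf
  | succ k ih =>
    rw [Function.iterate_succ_apply', show e - 2 * (k + 1) = e - 2 * k - 2 by omega]
    exact ih.laplacian

theorem IsHomogeneous.laplacian_eq_zero {f : MvPolynomial σ R} {e : ℕ} (hf : f.IsHomogeneous e)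
    (he : e < 2) : Δ f = 0 := by
  rw [laplacian_apply]
  refine Finset.sum_eq_zero fun i _ => ?_
  have h0 : (pderiv i f).IsHomogeneous 0 := by simpa [show e - 1 = 0 by omega] using hf.pderiv
  rw [totalDegree_eq_zero_iff_eq_C.mp ((totalDegree_zero_iff_isHomogeneous _).mpr h0), pderiv_C]

theorem IsHomogeneous.iterate_laplacian_eq_zero {f : MvPolynomial σ R} {e k : ℕ}
    (hf : f.IsHomogeneous e) (he : e < 2 * k) : Δ^[k] f = 0 := by
  obtain ⟨j, rfl⟩ : ∃ j, k = j + 1 := Nat.exists_eq_succ_of_ne_zero (by omega)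
  rw [Function.iterate_succ_apply']
  exact (hf.iterate_laplacian j).laplacian_eq_zero (by omega)

theorem homogeneousComponent_laplacian (d : ℕ) (f : MvPolynomial σ R) :
    homogeneousComponent d (Δ f) = Δ (homogeneousComponent (d + 2) f) := by
  simp only [laplacian_apply, map_sum, homogeneousComponent_pderiv]

theorem homogeneousComponent_iterate_laplacian (d k : ℕ) (f : MvPolynomial σ R) :
    homogeneousComponent d (Δ^[k] f) = Δ^[k] (homogeneousComponent (d + 2 * k) f) := by
  induction k generalizing d with
  | zero => rfl
  | succ k ih =>
    rw [Function.iterate_succ_apply', homogeneousComponent_laplacian, ih,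
      ← Function.iterate_succ_apply' Δ, show d + 2 + 2 * k = d + 2 * (k + 1) by ring]

theorem iterate_laplacian_homogeneousComponent_eq_zero {f : MvPolynomial σ R} {k : ℕ}
    (hf : Δ^[k] f = 0) (d : ℕ) : Δ^[k] (homogeneousComponent d f) = 0 := by
  rcases lt_or_ge d (2 * k) with hd | hd
  · exact (homogeneousComponent_isHomogeneous d f).iterate_laplacian_eq_zero hd
  · rw [← Nat.sub_add_cancel hd, ← homogeneousComponent_iterate_laplacian, hf, map_zero]

theorem laplacian_normSq_mul {q : MvPolynomial σ R} {e : ℕ} (hq : q.IsHomogeneous e) :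
    Δ (normSq σ R * q) = (2 * Fintype.card σ + 4 * e) • q + normSq σ R * Δ q := by
  have key (i : σ) : pderiv i (pderiv i (normSq σ R * q)) =
      2 * q + 4 * (X i * pderiv i q) + normSq σ R * pderiv i (pderiv i q) := by
    have h2 : pderiv i (2 : MvPolynomial σ R) = 0 := by exact_mod_cast (pderiv i).map_natCast 2
    simp only [pderiv_mul, pderiv_normSq, map_add, h2, pderiv_X_self]
    ring
  simp only [laplacian_apply, key, Finset.sum_add_distrib, ← Finset.mul_sum, hq.sum_X_mul_pderiv]
  rw [Finset.sum_const, Finset.card_univ, add_smul, mul_smul, mul_smul, nsmul_eq_mul, nsmul_eq_mul]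
  ring

theorem IsHomogeneous.exists_iterate_laplacian_normSq_mul [Nonempty σ] {q : MvPolynomial σ R}
    {e : ℕ} (hq : q.IsHomogeneous e) (k : ℕ) :
    ∃ c : ℕ, 0 < c ∧ Δ^[k + 1] (normSq σ R * q) = c • Δ^[k] q + normSq σ R * Δ^[k + 1] q := by
  induction k with
  | zero => exact ⟨_, by positivity, laplacian_normSq_mul hq⟩
  | succ k ih =>
    obtain ⟨c, hc, h⟩ := ih
    refine ⟨c + (2 * Fintype.card σ + 4 * (e - 2 * (k + 1))), by omega, ?_⟩
    rw [Function.iterate_succ_apply' _ (k + 1), h, map_add, map_nsmul,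
      laplacian_normSq_mul (hq.iterate_laplacian (k + 1)), ← Function.iterate_succ_apply' Δ,
      ← Function.iterate_succ_apply' Δ (k + 1)]
    module

variable (σ R) in
/-- `H + |x|² H + ⋯ + |x|^(2(p-1)) H`, where `H = ker Δ` is the space of harmonic polynomials. -/
noncomputable def almansiSubmodule : ℕ → Submodule R (MvPolynomial σ R)
  | 0 => ⊥
  | p + 1 => LinearMap.ker Δ ⊔ (almansiSubmodule p).map (LinearMap.mulLeft R (normSq σ R))

theorem exists_eq_sum_of_mem_almansiSubmodule {f : MvPolynomial σ R} {p : ℕ}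
    (hf : f ∈ almansiSubmodule σ R p) :
    ∃ φ : Fin p → MvPolynomial σ R,
      (∀ m, Δ (φ m) = 0) ∧ f = ∑ m : Fin p, normSq σ R ^ (m : ℕ) * φ m := by
  induction p generalizing f with
  | zero => exact ⟨Fin.elim0, fun m => m.elim0, by simpa [almansiSubmodule] using hf⟩
  | succ p ih =>
    obtain ⟨h, hh, _, ⟨q, hq, rfl⟩, rfl⟩ := Submodule.mem_sup.mp hf
    obtain ⟨φ, hφ, rfl⟩ := ih hq
    refine ⟨Fin.cons h φ, Fin.cases hh hφ, ?_⟩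
    simp [Fin.sum_univ_succ, pow_succ, mul_assoc, mul_left_comm]

end CommRing

section Field

variable [Fintype σ] [Field R] [CharZero R]

local notation "Δ" => laplacian σ R

theorem IsHomogeneous.eq_zero_of_smul_add_normSq_mul_laplacian {q : MvPolynomial σ R} {e c : ℕ}
    (hq : q.IsHomogeneous e) (hc : 0 < c) (h : c • q + normSq σ R * Δ q = 0) : q = 0 := by
  induction e using Nat.strong_induction_on generalizing q c with
  | _ e ih =>
  -- applying `Δ` gives an identity of the same shape for `Δ q`, of degree `e - 2`
  have hΔq : Δ q = 0 := by
    rcases lt_or_ge e 2 with he | he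
    · exact hq.laplacian_eq_zero he
    · refine ih (e - 2) (by omega) hq.laplacian (c := c + (2 * Fintype.card σ + 4 * (e - 2)))
        (by omega) ?_
      have := congrArg Δ h
      rwa [map_add, map_nsmul, laplacian_normSq_mul hq.laplacian, map_zero, ← add_assoc,
        ← add_smul] at this
  rw [hΔq, mul_zero, add_zero] at h
  exact (smul_eq_zero.mp h).resolve_left hc.ne'

theorem IsHomogeneous.iterate_laplacian_eq_zero_of_normSq_mul [Nonempty σ]
    {q : MvPolynomial σ R} {e k : ℕ} (hq : q.IsHomogeneous e)
    (h : Δ^[k + 1] (normSq σ R * q) = 0) : Δ^[k] q = 0 := by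
  obtain ⟨c, hc, hk⟩ := hq.exists_iterate_laplacian_normSq_mul k
  rw [hk, Function.iterate_succ_apply'] at h
  exact (hq.iterate_laplacian k).eq_zero_of_smul_add_normSq_mul_laplacian hc h

theorem IsHomogeneous.exists_laplacian_normSq_mul_eq [Nonempty σ] {w : MvPolynomial σ R} {e : ℕ}
    (hw : w.IsHomogeneous e) : ∃ q, q.IsHomogeneous e ∧ Δ (normSq σ R * q) = w := by
  let V := homogeneousSubmodule σ R e
  have : FiniteDimensional R V := Submodule.finiteDimensional_of_le
    (fun q (hq : q.IsHomogeneous e) => (mem_restrictTotalDegree σ e q).mpr hq.totalDegree_le)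
  let T : V →ₗ[R] V := (Δ ∘ₗ LinearMap.mulLeft R (normSq σ R)).restrict
    fun q (hq : q.IsHomogeneous e) => by
      simpa [V, mem_homogeneousSubmodule] using (isHomogeneous_normSq.mul hq).laplacian
  have hT : Function.Injective T := by
    rw [← LinearMap.ker_eq_bot, LinearMap.ker_eq_bot']
    intro q hq
    exact Subtype.ext <|
      q.2.iterate_laplacian_eq_zero_of_normSq_mul (k := 0) (congrArg Subtype.val hq)
  obtain ⟨q, hq⟩ := LinearMap.injective_iff_surjective.mp hT ⟨w, hw⟩
  exact ⟨q, q.2, congrArg Subtype.val hq⟩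

theorem IsHomogeneous.mem_almansiSubmodule {g : MvPolynomial σ R} {d p : ℕ}
    (hg : g.IsHomogeneous d) (h : Δ^[p] g = 0) : g ∈ almansiSubmodule σ R p := by
  induction p generalizing g d with
  | zero => exact (Submodule.mem_bot R).mpr h
  | succ p ih =>
    rcases isEmpty_or_nonempty σ with hσ | hσ
    · exact Submodule.mem_sup_left (laplacian_of_isEmpty g)
    obtain ⟨q, hq, hΔ⟩ := hg.laplacian.exists_laplacian_normSq_mul_eq
    have hpq : Δ^[p] q = 0 := hq.iterate_laplacian_eq_zero_of_normSq_mul <| by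
      rwa [Function.iterate_succ_apply, hΔ, ← Function.iterate_succ_apply]
    rw [← sub_add_cancel g (normSq σ R * q)]
    exact Submodule.add_mem_sup (by simp [hΔ]) (Submodule.mem_map_of_mem (ih hq hpq))

theorem mem_almansiSubmodule_of_iterate_laplacian_eq_zero {f : MvPolynomial σ R} {p : ℕ}
    (hf : Δ^[p] f = 0) : f ∈ almansiSubmodule σ R p := by
  rw [← sum_homogeneousComponent f]
  exact Submodule.sum_mem _ fun d _ => (homogeneousComponent_isHomogeneous d f).mem_almansiSubmodule
    (iterate_laplacian_homogeneousComponent_eq_zero hf d)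

end Field

end MvPolynomial

open MvPolynomial

section Euclidean

variable {ι : Type*} [Fintype ι]

theorem hasFDerivAt_eval (P : MvPolynomial ι ℝ) (x : EuclideanSpace ℝ ι) :
    HasFDerivAt (fun y : EuclideanSpace ℝ ι => eval (fun i => y i) P)
      (∑ i, eval (fun j => x j) (pderiv i P) • EuclideanSpace.proj (𝕜 := ℝ) i) x := by
  induction P using MvPolynomial.induction_on with
  | C a => simpa using hasFDerivAt_const a x
  | add p q hp hq =>
    simp only [map_add, add_smul, Finset.sum_add_distrib]
    exact hp.fun_add hq
  | mul_X p i hp =>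
    classical
    simp only [eval_mul, eval_X]
    refine (hp.fun_mul (EuclideanSpace.proj i).hasFDerivAt).congr_fderiv ?_
    simp only [pderiv_mul, pderiv_X, Pi.single_apply, map_add, map_mul, eval_X, add_smul,
      Finset.sum_add_distrib, Finset.smul_sum, smul_smul]
    simp [mul_comm, add_comm]

theorem iteratedFDeriv_two_eval_single [DecidableEq ι] (P : MvPolynomial ι ℝ)
    (x : EuclideanSpace ℝ ι) (i : ι) :
    iteratedFDeriv ℝ 2 (fun y : EuclideanSpace ℝ ι => eval (fun j => y j) P) x
      (fun _ => EuclideanSpace.single i 1) = eval (fun j => x j) (pderiv i (pderiv i P)) := by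
  have hD : HasFDerivAt (fderiv ℝ fun y : EuclideanSpace ℝ ι => eval (fun j => y j) P)
      (∑ j, (∑ k, eval (fun l => x l) (pderiv k (pderiv j P)) •
        EuclideanSpace.proj (𝕜 := ℝ) k).smulRight (EuclideanSpace.proj (𝕜 := ℝ) j)) x := by
    rw [funext fun y => (hasFDerivAt_eval P y).fderiv]
    exact HasFDerivAt.fun_sum fun j _ => (hasFDerivAt_eval (pderiv j P) x).smul_const
      (EuclideanSpace.proj j : EuclideanSpace ℝ ι →L[ℝ] ℝ)
  rw [iteratedFDeriv_two_apply, hD.fderiv]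
  simp [PiLp.single_apply]

theorem eval_normSq (x : EuclideanSpace ℝ ι) : eval (fun i => x i) (normSq ι ℝ) = ‖x‖ ^ 2 := by
  simp [normSq, EuclideanSpace.norm_sq_eq]

end Euclidean

theorem stmtLaplacian_eval {n : ℕ} (P : MvPolynomial (Fin n) ℝ) :
    stmtLaplacian (fun y => eval (fun i => y i) P)
      = fun y => eval (fun i => y i) (laplacian (Fin n) ℝ P) := by
  funext x
  simp [stmtLaplacian, iteratedFDeriv_two_eval_single, laplacian_apply]

theorem iterate_stmtLaplacian_eval {n : ℕ} (k : ℕ) (P : MvPolynomial (Fin n) ℝ) :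
    stmtLaplacian^[k] (fun y => eval (fun i => y i) P)
      = fun y => eval (fun i => y i) ((laplacian (Fin n) ℝ)^[k] P) := by
  induction k generalizing P with
  | zero => rfl
  | succ k ih =>
    rw [Function.iterate_succ_apply, stmtLaplacian_eval, ih, Function.iterate_succ_apply]

theorem stmt18_almansi_decomposition_general {n : ℕ} (p : ℕ)
    (f : MvPolynomial (Fin n) ℝ)
    (hf : ∀ x, (stmtLaplacian^[p] (fun y => MvPolynomial.eval (fun i => y i) f)) x = 0) :
    ∃ φ : Fin p → MvPolynomial (Fin n) ℝ,
      (∀ m : Fin p, ∀ x,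
        stmtLaplacian (fun y => MvPolynomial.eval (fun i => y i) (φ m)) x = 0) ∧
      ∀ x : EuclideanSpace ℝ (Fin n),
        MvPolynomial.eval (fun i => x i) f
          = ∑ m : Fin p, ‖x‖ ^ (2 * (m : ℕ)) * MvPolynomial.eval (fun i => x i) (φ m) := by
  have hΔf : (laplacian (Fin n) ℝ)^[p] f = 0 :=
    MvPolynomial.funext fun x => by simpa [iterate_stmtLaplacian_eval] using hf (WithLp.toLp 2 x)
  obtain ⟨φ, hφ, rfl⟩ :=
    exists_eq_sum_of_mem_almansiSubmodule (mem_almansiSubmodule_of_iterate_laplacian_eq_zero hΔf)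
  refine ⟨φ, fun m x => by simp [stmtLaplacian_eval, hφ m], fun x => ?_⟩
  simp [eval_normSq, pow_mul]

theorem stmt18_almansi_decomposition {n : ℕ} (p : ℕ) (hp : 1 ≤ p)
    (f : MvPolynomial (Fin n) ℝ)
    (hf : ∀ x, (stmtLaplacian^[p] (fun y => MvPolynomial.eval (fun i => y i) f)) x = 0) :
    ∃ φ : Fin p → MvPolynomial (Fin n) ℝ,
      (∀ m : Fin p, ∀ x,
        stmtLaplacian (fun y => MvPolynomial.eval (fun i => y i) (φ m)) x = 0) ∧
      ∀ x : EuclideanSpace ℝ (Fin n),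
        MvPolynomial.eval (fun i => x i) f
          = ∑ m : Fin p, ‖x‖ ^ (2 * (m : ℕ)) * MvPolynomial.eval (fun i => x i) (φ m) :=
  stmt18_almansi_decomposition_general p f hf
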